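/- Let μ be a finite nonnegative Borel measure on ℝⁿ and let s > 0. Then the set R_μ = {x ∈ ℝⁿ : μ(∂B_s(x)) > 0} of points x whose sphere of radius s carries positive μ-mass is Lebesgue negligible. -/
import Mathlib


open MeasureTheory Metric

/-- Spheres of a fixed radius `s > 0` carrying positive mass for a finite Borel
measure `μ` on `ℝⁿ` are centered at a Lebesgue-negligible set of points. -/
theorem sphere_positive_measure_centers_negligible
    {n : ℕ} (μ : Measure (EuclideanSpace ℝ (Fin n))) [IsFiniteMeasure μ]
    (s : ℝ) (hs : 0 < s) :
    volume {x : EuclideanSpace ℝ (Fin n) | 0 < μ (sphere x s)} = 0 := by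
  rcases Nat.eq_zero_or_pos n with hn | hn
  · subst hn
    have h : ∀ x : EuclideanSpace ℝ (Fin 0), sphere x s = ∅ := by
      intro x
      ext y
      simp [mem_sphere, Subsingleton.elim y x, hs.ne]
    simp [h]
  · haveI : Nontrivial (EuclideanSpace ℝ (Fin n)) :=
      Module.nontrivial_of_finrank_pos (R := ℝ) (by simp [hn] :
        0 < Module.finrank ℝ (EuclideanSpace ℝ (Fin n)))
    set S : Set (EuclideanSpace ℝ (Fin n) × EuclideanSpace ℝ (Fin n)) :=
      {p | dist p.2 p.1 = s} with hSdef
    have hS : MeasurableSet S :=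
      (isClosed_eq (continuous_snd.dist continuous_fst) continuous_const).measurableSet
    have hpre : ∀ x, Prod.mk x ⁻¹' S = sphere x s := by
      intro x; ext y; simp [hSdef, mem_sphere, dist_eq_norm]
    have hmeas : Measurable fun x => μ (sphere x s) := by
      simp_rw [← hpre]
      exact measurable_measure_prodMk_left hS
    have hint : ∫⁻ x, μ (sphere x s) = 0 := by
      have h1 : ∫⁻ x, μ (sphere x s) = (volume.prod μ) S := by
        rw [Measure.prod_apply hS]; simp_rw [hpre]
      have h2 : ∀ y, (fun x => (x, y)) ⁻¹' S = sphere y s := by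
        intro y; ext x; simp [hSdef, mem_sphere, dist_eq_norm, norm_sub_rev]
      rw [h1, Measure.prod_apply_symm hS]
      simp [h2, Measure.addHaar_sphere]
    have hae := (lintegral_eq_zero_iff hmeas).1 hint
    rw [Filter.EventuallyEq, ae_iff] at hae
    refine measure_mono_null (fun x hx => ?_) hae
    simpa using (pos_iff_ne_zero.1 hx)
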